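/- Let d ≥ 1 and 1 ≤ N ≤ M, with P₊^{(k)} the symmetrizer on (Fin k → Fin d) and d₊^{(k)} = C(d+k−1,k). Let Clone be the universal cloning map Clone(ν) := (d₊^{(N)}/d₊^{(M)}) · P₊^{(M)} ((P₊^{(N)} ν P₊^{(N)}) ⊗ I) P₊^{(M)} from matrices on (Fin N → Fin d) to matrices on (Fin M → Fin d), and TrCh the partial trace map TrCh(μ) := P₊^{(N)} (partial trace over the last M−N factors of P₊^{(M)} μ P₊^{(M)}) P₊^{(N)} in the opposite direction. Define the Choi matrix of a linear map 𝓔 on matrices by Choi(𝓔)((f,g),(f',g')) := (𝓔 E_{g,g'})(f,f'), where E_{g,g'} is the matrix unit. Then for all f, f' : Fin M → Fin d and g, g' : Fin N → Fin d: Choi(Clone)((f,g),(f',g')) = (d₊^{(N)}/d₊^{(M)}) · Choi(TrCh)((g,f),(g',f')). (The Choi matrix of universal cloning equals d₊^{(N)}/d₊^{(M)} times the Choi matrix of the partial trace channel with input and output factors swapped.) -/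

import Mathlib

open Matrix
open scoped Kronecker ComplexOrder

/-- The permutation matrix on the k-fold tensor power of ℂ^d associated to a
permutation π of the tensor factors. -/
noncomputable def permMat (d k : ℕ) (π : Equiv.Perm (Fin k)) :
    Matrix (Fin k → Fin d) (Fin k → Fin d) ℂ :=
  Matrix.of fun f g => if g = f ∘ π then 1 else 0

/-- The symmetrizer: the orthogonal projection onto the symmetric subspace of the
k-fold tensor power of ℂ^d. -/
noncomputable def symProj (d k : ℕ) : Matrix (Fin k → Fin d) (Fin k → Fin d) ℂ :=
  (1 / (Nat.factorial k : ℂ)) • ∑ π : Equiv.Perm (Fin k), permMat d k π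

/-- Restriction of g : Fin M → Fin d to the first N tensor factors (N ≤ M). -/
def headN (d N M : ℕ) (hNM : N ≤ M) (g : Fin M → Fin d) : Fin N → Fin d :=
  fun i => g ⟨i, lt_of_lt_of_le i.isLt hNM⟩

/-- Restriction of g : Fin M → Fin d to the last M - N tensor factors. -/
def tailN (d N M : ℕ) (hNM : N ≤ M) (g : Fin M → Fin d) : Fin (M - N) → Fin d :=
  fun i => g ⟨N + i, by have := i.isLt; omega⟩

/-- Concatenation of f : Fin N → Fin d with h : Fin (M-N) → Fin d, under the
identification of Fin M with Fin N ⊕ Fin (M-N). -/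
def concatN (d N M : ℕ) (hNM : N ≤ M) (f : Fin N → Fin d) (h : Fin (M - N) → Fin d) :
    Fin M → Fin d :=
  fun i => if hi : (i : ℕ) < N then f ⟨i, hi⟩
    else h ⟨(i : ℕ) - N, by have := i.isLt; omega⟩

/-- The matrix A ⊗ I on the M-fold tensor power, where A acts on the first N factors
and the identity on the last M - N factors. -/
noncomputable def extendN (d N M : ℕ) (hNM : N ≤ M)
    (A : Matrix (Fin N → Fin d) (Fin N → Fin d) ℂ) :
    Matrix (Fin M → Fin d) (Fin M → Fin d) ℂ :=
  Matrix.of fun f g =>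
    A (headN d N M hNM f) (headN d N M hNM g) *
      (if tailN d N M hNM f = tailN d N M hNM g then 1 else 0)

/-- The optimal universal cloning map from N to M ≥ N copies:
Clone(ν) = (d₊^{(N)}/d₊^{(M)}) · P₊^{(M)} ((P₊^{(N)} ν P₊^{(N)}) ⊗ I) P₊^{(M)}. -/
noncomputable def Clone (d N M : ℕ) (hNM : N ≤ M)
    (ν : Matrix (Fin N → Fin d) (Fin N → Fin d) ℂ) :
    Matrix (Fin M → Fin d) (Fin M → Fin d) ℂ :=
  ((Nat.choose (d + N - 1) N : ℂ) / (Nat.choose (d + M - 1) M : ℂ)) •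
    (symProj d M * extendN d N M hNM (symProj d N * ν * symProj d N) * symProj d M)

/-- The partial trace over the last M - N tensor factors. -/
noncomputable def ptraceN (d N M : ℕ) (hNM : N ≤ M)
    (A : Matrix (Fin M → Fin d) (Fin M → Fin d) ℂ) :
    Matrix (Fin N → Fin d) (Fin N → Fin d) ℂ :=
  Matrix.of fun f g =>
    ∑ h : Fin (M - N) → Fin d, A (concatN d N M hNM f h) (concatN d N M hNM g h)

/-- The symmetric partial trace channel from M to N ≤ M copies:
TrCh(μ) = P₊^{(N)} Tr_{N+1,…,M}[P₊^{(M)} μ P₊^{(M)}] P₊^{(N)}. -/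
noncomputable def TrCh (d N M : ℕ) (hNM : N ≤ M)
    (μ : Matrix (Fin M → Fin d) (Fin M → Fin d) ℂ) :
    Matrix (Fin N → Fin d) (Fin N → Fin d) ℂ :=
  symProj d N * ptraceN d N M hNM (symProj d M * μ * symProj d M) * symProj d N

/-! Splitting an M-fold index as x ⊕ h, the factor ⊗ I forces the row and column indices on the
cloning side to share their tail h, which is exactly the tail summed over by the partial trace.
Entrywise both Choi matrices are therefore the same sum of products of four matrix entries, up to
transposing every matrix, and the symmetrizer is transpose-invariant because U_πᵀ = U_{π⁻¹}. -/

lemma permMat_transpose (d k : ℕ) (π : Equiv.Perm (Fin k)) :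
    (permMat d k π)ᵀ = permMat d k π⁻¹ := by
  ext f g
  simp only [transpose_apply, permMat, of_apply, Equiv.Perm.inv_def, Equiv.eq_comp_symm, eq_comm]

lemma symProj_transpose (d k : ℕ) : (symProj d k)ᵀ = symProj d k := by
  simp only [symProj, transpose_smul, transpose_sum, permMat_transpose]
  congr 1
  exact Equiv.sum_comp (Equiv.inv _) (permMat d k)

lemma mul_single_mul_apply {n R : Type*} [Fintype n] [DecidableEq n]
    [NonUnitalNonAssocSemiring R]
    (A B : Matrix n n R) (i j x y : n) (c : R) :
    (A * single i j c * B) x y = A x i * c * B j y := by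
  simp [mul_apply, single, ite_and]

section Concat

variable {d N M : ℕ} (hNM : N ≤ M)

lemma headN_concatN (x : Fin N → Fin d) (h : Fin (M - N) → Fin d) :
    headN d N M hNM (concatN d N M hNM x h) = x := by
  funext i; simp [headN, concatN]

lemma tailN_concatN (x : Fin N → Fin d) (h : Fin (M - N) → Fin d) :
    tailN d N M hNM (concatN d N M hNM x h) = h := by
  funext i
  simp [tailN, concatN]

lemma concatN_headN_tailN (a : Fin M → Fin d) :
    concatN d N M hNM (headN d N M hNM a) (tailN d N M hNM a) = a := by
  funext i
  by_cases hi : (i : ℕ) < N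
  · simp [concatN, headN, hi]
  · simp only [concatN, dif_neg hi, tailN]
    congr 1
    exact Fin.ext (by simp; omega)

def concatEquiv : ((Fin N → Fin d) × (Fin (M - N) → Fin d)) ≃ (Fin M → Fin d) where
  toFun p := concatN d N M hNM p.1 p.2
  invFun a := (headN d N M hNM a, tailN d N M hNM a)
  left_inv p := by simp [headN_concatN, tailN_concatN]
  right_inv := concatN_headN_tailN hNM

lemma sum_concatN {β : Type*} [AddCommMonoid β] (F : (Fin M → Fin d) → β) :
    ∑ a, F a = ∑ x, ∑ h, F (concatN d N M hNM x h) := by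
  rw [← (concatEquiv hNM).sum_comp, Fintype.sum_prod_type]
  rfl

lemma extendN_concatN_apply (A : Matrix (Fin N → Fin d) (Fin N → Fin d) ℂ)
    (x y : Fin N → Fin d) (h h' : Fin (M - N) → Fin d) :
    extendN d N M hNM A (concatN d N M hNM x h) (concatN d N M hNM y h') =
      A x y * if h = h' then 1 else 0 := by
  simp only [extendN, of_apply, headN_concatN, tailN_concatN]

lemma mul_extendN_mul_apply (P P' : Matrix (Fin M → Fin d) (Fin M → Fin d) ℂ)
    (A : Matrix (Fin N → Fin d) (Fin N → Fin d) ℂ) (f f' : Fin M → Fin d) :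
    (P * extendN d N M hNM A * P') f f' =
      ∑ y, ∑ x, ∑ h, P f (concatN d N M hNM x h) * A x y * P' (concatN d N M hNM y h) f' := by
  simp only [mul_apply, Finset.sum_mul, sum_concatN hNM, extendN_concatN_apply, mul_ite,
    ite_mul, mul_one, mul_zero, zero_mul, Finset.sum_ite_eq', Finset.mem_univ, if_true]
  congr! 1 with y
  exact Finset.sum_comm

lemma mul_ptraceN_mul_apply (R R' : Matrix (Fin N → Fin d) (Fin N → Fin d) ℂ)
    (B : Matrix (Fin M → Fin d) (Fin M → Fin d) ℂ) (u v : Fin N → Fin d) :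
    (R * ptraceN d N M hNM B * R') u v =
      ∑ y, ∑ x, ∑ h, R u x * B (concatN d N M hNM x h) (concatN d N M hNM y h) * R' y v := by
  simp only [mul_apply, ptraceN, of_apply, Finset.sum_mul, Finset.mul_sum]

lemma choi_extendN_eq_choi_ptraceN (P P' : Matrix (Fin M → Fin d) (Fin M → Fin d) ℂ)
    (Q Q' : Matrix (Fin N → Fin d) (Fin N → Fin d) ℂ) (f f' : Fin M → Fin d)
    (g g' : Fin N → Fin d) :
    (P * extendN d N M hNM (Q * single g g' 1 * Q') * P') f f' =
      (Qᵀ * ptraceN d N M hNM (Pᵀ * single f f' 1 * P'ᵀ) * Q'ᵀ) g g' := by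
  simp only [mul_extendN_mul_apply, mul_ptraceN_mul_apply, mul_single_mul_apply, transpose_apply]
  refine Finset.sum_congr rfl fun y _ => Finset.sum_congr rfl fun x _ =>
    Finset.sum_congr rfl fun h _ => ?_
  ring

end Concat

theorem clone_trace_choi_duality_general (d N M : ℕ) (hNM : N ≤ M)
    (f f' : Fin M → Fin d) (g g' : Fin N → Fin d) :
    Clone d N M hNM (single g g' (1 : ℂ)) f f' =
      ((Nat.choose (d + N - 1) N : ℂ) / (Nat.choose (d + M - 1) M : ℂ)) *
        TrCh d N M hNM (single f f' (1 : ℂ)) g g' := by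
  rw [Clone, TrCh, Matrix.smul_apply, smul_eq_mul, choi_extendN_eq_choi_ptraceN, symProj_transpose,
    symProj_transpose]

/-- The Choi matrix of universal cloning equals d₊^{(N)}/d₊^{(M)} times the Choi matrix
of the partial trace channel with input and output factors swapped. -/
theorem clone_trace_choi_duality (d N M : ℕ) (hd : 1 ≤ d) (hN : 1 ≤ N) (hNM : N ≤ M)
    (f f' : Fin M → Fin d) (g g' : Fin N → Fin d) :
    Clone d N M hNM (single g g' (1 : ℂ)) f f' =
      ((Nat.choose (d + N - 1) N : ℂ) / (Nat.choose (d + M - 1) M : ℂ)) *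
        TrCh d N M hNM (single f f' (1 : ℂ)) g g' :=
  clone_trace_choi_duality_general d N M hNM f f' g g'
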